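/- arXiv:0706.2213 — 3 statements merged into one kernel-verified Lean document; each statement's English description precedes it below -/
import Mathlib

section
/- Let u ∈ C and W = [[1-u, -u],[u^2, u^2+u+1]], and for m ≥ 1 denote by w_{ij} the entries of W^m. If w_{11}=0 and u·w_{12}+w_{21}=0 (the Riley conditions for W^m), then w_{22} = −(u+2)·w_{12}. -/
theorem riley_entry_relation (u : ℂ) (m : ℕ) (hm : 1 ≤ m)
    (V : Matrix (Fin 2) (Fin 2) ℂ)
    (hV : V = (!![1 - u, -u; u ^ 2, u ^ 2 + u + 1] : Matrix (Fin 2) (Fin 2) ℂ) ^ m)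
    (h11 : V 0 0 = 0) (h21 : u * V 0 1 + V 1 0 = 0) :
    V 1 1 = -(u + 2) * V 0 1 := by
  set A : Matrix (Fin 2) (Fin 2) ℂ := !![1 - u, -u; u ^ 2, u ^ 2 + u + 1] with hA
  by_cases hu : u = 0
  · exfalso
    subst hu
    have hA1 : A = 1 := by
      rw [hA, Matrix.one_fin_two]; norm_num
    rw [hV, hA1, one_pow] at h11
    simp [Matrix.one_fin_two] at h11
  · have hc : A * V = V * A := by
      rw [hV]; exact ((Commute.refl A).pow_right m)
    have h01 := congrArg (fun M => M 0 1) hc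
    simp [Matrix.mul_apply, Fin.sum_univ_two, hA] at h01
    have key : u * (V 1 1 - (-(u + 2) * V 0 1)) = 0 := by linear_combination -h01 + u * h11
    rcases mul_eq_zero.mp key with h | h
    · exact absurd h hu
    · linear_combination h
end

section
/- Let ξ₊, ξ₋ be the eigenvalues of a matrix W ∈ SL_2(C) with ξ₊ ≠ ξ₋, and suppose the 3×3 matrix S_m = I + W' + ⋯ + (W')^{m-1} where W' has eigenvalues ξ₊², 1, ξ₋² (the adjoint/symmetric-square eigenvalues). Then det(S_m) = m·t_m², where t_m = (ξ₊^m − ξ₋^m)/(ξ₊ − ξ₋) and ξ₊·ξ₋ = 1. -/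
/-!
`S_m` is diagonal, with the geometric sums of `ξ₋², 1, ξ₊²` on the diagonal. Since `ξ₊ ξ₋ = 1`,
the two outer sums are `ξ₋^(m-1) t_m` and `ξ₊^(m-1) t_m`, where
`t_m = ∑_{i<m} ξ₊^i ξ₋^(m-1-i)`, so their product is `t_m²`.
-/

open Finset

theorem geom_sum_sq_eq_pow_mul_geom_sum₂ {R : Type*} [CommRing R] {x y : R} (hxy : x * y = 1)
    (m : ℕ) :
    ∑ i ∈ range m, (x ^ 2) ^ i = x ^ (m - 1) * ∑ i ∈ range m, x ^ i * y ^ (m - 1 - i) := by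
  rw [mul_sum]
  refine sum_congr rfl fun i hi => ?_
  obtain ⟨k, hk⟩ : ∃ k, m - 1 = i + k := ⟨m - 1 - i, by have := mem_range.mp hi; omega⟩
  rw [hk, Nat.add_sub_cancel_left]
  calc (x ^ 2) ^ i = (x ^ 2) ^ i * (x * y) ^ k := by rw [hxy, one_pow, mul_one]
    _ = x ^ (i + k) * (x ^ i * y ^ k) := by ring

theorem geom_sum_sq_mul_geom_sum_sq_of_mul_eq_one {R : Type*} [CommRing R] {x y : R}
    (hxy : x * y = 1) (m : ℕ) :
    (∑ i ∈ range m, (x ^ 2) ^ i) * ∑ i ∈ range m, (y ^ 2) ^ i =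
      (∑ i ∈ range m, x ^ i * y ^ (m - 1 - i)) ^ 2 := by
  rw [geom_sum_sq_eq_pow_mul_geom_sum₂ hxy,
    geom_sum_sq_eq_pow_mul_geom_sum₂ (x := y) (y := x) (by rw [mul_comm, hxy]),
    geom_sum₂_comm y x]
  calc _ = (x * y) ^ (m - 1) * (∑ i ∈ range m, x ^ i * y ^ (m - 1 - i)) ^ 2 := by ring
    _ = _ := by rw [hxy, one_pow, one_mul]

namespace Matrix

variable {n R : Type*} [Fintype n] [DecidableEq n] [CommRing R]

theorem inv_diagonal_of_mul_eq_one {v w : n → R} (h : w * v = 1) :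
    (diagonal v)⁻¹ = diagonal w :=
  inv_eq_left_inv (by rw [diagonal_mul_diagonal, ← Pi.mul_def, h]; exact diagonal_one)

theorem det_geom_sum_diagonal (v : n → R) (m : ℕ) :
    (∑ i ∈ range m, diagonal v ^ i).det = ∏ j, ∑ i ∈ range m, v j ^ i := by
  simp_rw [diagonal_pow, ← diagonalAddMonoidHom_apply, ← map_sum, diagonalAddMonoidHom_apply,
    det_diagonal, Finset.sum_apply, Pi.pow_apply]

end Matrix

theorem det_geometric_sum_adjoint (ξp ξm : ℂ) (hprod : ξp * ξm = 1)
    (hne : ξp ≠ ξm) (m : ℕ) :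
    let D : Matrix (Fin 3) (Fin 3) ℂ := Matrix.diagonal ![ξp ^ 2, 1, ξm ^ 2]
    let S := ∑ i ∈ Finset.range m, (D⁻¹) ^ i
    S.det = (m : ℂ) * ((ξp ^ m - ξm ^ m) / (ξp - ξm)) ^ 2 := by
  intro D S
  have hD : D⁻¹ = Matrix.diagonal ![ξm ^ 2, 1, ξp ^ 2] := by
    refine Matrix.inv_diagonal_of_mul_eq_one (funext fun j => ?_)
    fin_cases j <;>
      simp only [Fin.zero_eta, Fin.mk_one, Fin.reduceFinMk, Pi.mul_apply, Pi.one_apply,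
        Matrix.cons_val_zero, Matrix.cons_val_one, Matrix.cons_val, mul_one] <;>
      linear_combination (ξp * ξm + 1) * hprod
  simp only [S, hD, Matrix.det_geom_sum_diagonal, Fin.prod_univ_three, Matrix.cons_val_zero,
    Matrix.cons_val_one, Matrix.cons_val_two, Matrix.head_cons, Matrix.tail_cons, one_pow,
    sum_const, card_range, nsmul_eq_mul, mul_one]
  rw [mul_right_comm, mul_comm, ← geom₂_sum hne,
    geom_sum_sq_mul_geom_sum_sq_of_mul_eq_one (by rw [mul_comm, hprod]), geom_sum₂_comm]
end

section
/- The Riley polynomial of the twist knot J(2,2m) satisfies φ_{J(2,2m)}(s,u) = (s + s^{-1} − 1 − u)·t_m − t_{m−1}, where t_k = (ξ₊^k − ξ₋^k)/(ξ₊ − ξ₋) and ξ± are the eigenvalues of the matrix W = [[1−su, 1/s − u − 1],[−u + su(u+1), −u/s + (u+1)²]]; in particular φ_{J(2,2)}(s,u) = s + s^{-1} − 1 − u. -/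
/-!
`W` has determinant `1`, so by Cayley–Hamilton `W² = τ W - 1` with `τ = tr W = ξ₊ + ξ₋`.
The sequence `t_k` satisfies the same recurrence `t_{k+2} = τ t_{k+1} - t_k` with `t_0 = 0`,
`t_1 = 1`, whence `W^m = t_m W - t_{m-1}`. Applying the linear form
`w ↦ w₁₁ + (1 - s) w₁₂` gives `φ_{J(2,2m)} = t_m φ_{J(2,2)} - t_{m-1}`, and
`φ_{J(2,2)} = s + s⁻¹ - 1 - u` is a direct computation.
-/

open Matrix

theorem Matrix.sq_eq_trace_smul_sub_det_smul_one {R : Type*} [CommRing R]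
    (M : Matrix (Fin 2) (Fin 2) R) : M ^ 2 = M.trace • M - M.det • 1 := by
  nontriviality R
  have hCH := M.aeval_self_charpoly
  rw [charpoly_fin_two] at hCH
  simp only [map_add, map_sub, map_mul, map_pow, Polynomial.aeval_X, Polynomial.aeval_C,
    Algebra.algebraMap_eq_smul_one, smul_mul_assoc, one_mul] at hCH
  rw [← sub_eq_zero, ← hCH]
  abel

theorem pow_succ_eq_smul_sub_smul_one {K A : Type*} [CommRing K] [Ring A] [Algebra K A]
    {a : A} {τ : K} (ha : a ^ 2 = τ • a - 1) {t : ℕ → K} (h0 : t 0 = 0) (h1 : t 1 = 1)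
    (hrec : ∀ n, t (n + 2) = τ * t (n + 1) - t n) (n : ℕ) :
    a ^ (n + 1) = t (n + 1) • a - t n • (1 : A) := by
  induction n with
  | zero => simp [h0, h1]
  | succ n ih =>
    calc a ^ (n + 2) = t (n + 1) • a ^ 2 - t n • a := by
          rw [pow_succ, ih, sub_mul, smul_mul_assoc, smul_mul_assoc, one_mul, sq]
      _ = t (n + 2) • a - t (n + 1) • (1 : A) := by
          rw [ha, hrec]
          module

theorem div_sub_pow_add_two {F : Type*} [Field F] {x y : F} (hxy : x * y = 1) (n : ℕ) :
    (x ^ (n + 2) - y ^ (n + 2)) / (x - y) =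
      (x + y) * ((x ^ (n + 1) - y ^ (n + 1)) / (x - y)) - (x ^ n - y ^ n) / (x - y) := by
  rw [mul_div_assoc', div_sub_div_same]
  congr 1
  linear_combination (y ^ n - x ^ n) * hxy

section TwistKnot

variable {K : Type*} [Field K] (s u : K)

def twistKnotMatrix : Matrix (Fin 2) (Fin 2) K :=
  !![1 - s * u, 1 / s - u - 1; -u + s * u * (u + 1), -u / s + (u + 1) ^ 2]

theorem det_twistKnotMatrix (hs : s ≠ 0) : (twistKnotMatrix s u).det = 1 := by
  rw [twistKnotMatrix, det_fin_two_of]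
  field_simp
  ring

theorem twistKnotMatrix_riley (hs : s ≠ 0) :
    twistKnotMatrix s u 0 0 + (1 - s) * twistKnotMatrix s u 0 1 = s + s⁻¹ - 1 - u := by
  simp only [twistKnotMatrix, of_apply, cons_val', cons_val_zero, cons_val_one, empty_val',
    cons_val_fin_one]
  field_simp
  ring

end TwistKnot

theorem riley_polynomial_twist_knot (s u ξp ξm : ℂ) (hs : s ≠ 0)
    (W : Matrix (Fin 2) (Fin 2) ℂ)
    (hW : W = !![1 - s * u, 1 / s - u - 1; -u + s * u * (u + 1), -u / s + (u + 1) ^ 2])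
    (hsum : ξp + ξm = W.trace) (hprod : ξp * ξm = 1) (hne : ξp ≠ ξm)
    (t : ℕ → ℂ) (ht : ∀ k, t k = (ξp ^ k - ξm ^ k) / (ξp - ξm))
    (m : ℕ) (hm : 1 ≤ m) :
    (W ^ m) 0 0 + (1 - s) * (W ^ m) 0 1 = (s + s⁻¹ - 1 - u) * t m - t (m - 1) ∧
    W 0 0 + (1 - s) * W 0 1 = s + s⁻¹ - 1 - u := by
  replace hW : W = twistKnotMatrix s u := hW
  have hriley : W 0 0 + (1 - s) * W 0 1 = s + s⁻¹ - 1 - u := hW ▸ twistKnotMatrix_riley s u hs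
  have hsq : W ^ 2 = (ξp + ξm) • W - 1 := by
    rw [W.sq_eq_trace_smul_sub_det_smul_one, hsum, hW, det_twistKnotMatrix s u hs, one_smul]
  have ht0 : t 0 = 0 := by simp [ht]
  have ht1 : t 1 = 1 := by rw [ht]; field_simp [sub_ne_zero.mpr hne]
  have hrec (k : ℕ) : t (k + 2) = (ξp + ξm) * t (k + 1) - t k := by
    simp only [ht, div_sub_pow_add_two hprod]
  obtain ⟨n, rfl⟩ := Nat.exists_eq_add_of_le' hm
  have hpow := pow_succ_eq_smul_sub_smul_one hsq ht0 ht1 hrec n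
  refine ⟨?_, hriley⟩
  rw [hpow, Nat.add_sub_cancel]
  simp only [Matrix.sub_apply, Matrix.smul_apply, one_apply_eq, one_apply_ne zero_ne_one,
    smul_eq_mul]
  linear_combination t (n + 1) * hriley
end
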